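/- arXiv:2306.03593 — 6 statements merged into one kernel-verified Lean document; each statement's English description precedes it below -/
import Mathlib

section
/- Let p ≥ 1, let μ ∈ ℝ^p, let Σ be a p×p real positive definite matrix, and let α, η > 0. Let the law of the random vector Y on ℝ^p be the Beta-scale mixture of Gaussians, i.e. the measure (Beta(α, η)).bind (fun r => N_p(μ, r⁻¹ • Σ)). Then Y is absolutely continuous with respect to Lebesgue measure on ℝ^p with density h(y) = Γ(α+η) / ( (2π)^{p/2} (det Σ)^{1/2} Γ(α) Γ(η) ) · ∫_0^1 exp( −r·(y−μ)ᵀΣ⁻¹(y−μ)/2 ) · r^{α+p/2−1} (1−r)^{η−1} dr. (This is Theorem A.1 of the paper, with the confluent hypergeometric function M(α, η+p/2+α, −(y−μ)ᵀΣ⁻¹(y−μ)/2) written via its Euler integral representation.) -/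
/-!
Since `(r⁻¹ • Σ)⁻¹ = r • Σ⁻¹` and `det (r⁻¹ • Σ) = r⁻ᵖ det Σ`, the density of `N_p(μ, Σ/r)` at `y`
is `(2π)^(-p/2) (det Σ)^(-1/2) r^(p/2) exp(-r q(y)/2)` with `q(y) = (y-μ)ᵀΣ⁻¹(y-μ)`, a jointly
measurable function of `(r, y)`. By Tonelli, a mixture of measures with densities `f r` is the
measure with density `y ↦ ∫ f r y dR`; against the Beta density the powers of `r` combine to
`r^(α+p/2-1)`, which is integrable on `(0,1)` together with the bounded factor `exp(-r q(y)/2)`.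
-/

open MeasureTheory Matrix

/-- The multivariate Gaussian distribution `N_p(μ, Σ)` on `ℝ^p`, given by its Lebesgue
density `(2π)^(−p/2) (det Σ)^(−1/2) exp(−(y−μ)ᵀ Σ⁻¹ (y−μ)/2)`. -/
noncomputable def mvGaussian {p : ℕ} (μ : Fin p → ℝ) (S : Matrix (Fin p) (Fin p) ℝ) :
    Measure (Fin p → ℝ) :=
  volume.withDensity fun y =>
    ENNReal.ofReal ((2 * Real.pi) ^ (-(p : ℝ) / 2) * S.det ^ (-(1 : ℝ) / 2) *
      Real.exp (-((y - μ) ⬝ᵥ (S⁻¹ *ᵥ (y - μ))) / 2))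

/-- The Beta distribution on `(0,1)` with parameters `a, b`. -/
noncomputable def betaMeasure (a b : ℝ) : Measure ℝ :=
  volume.withDensity fun x =>
    ENNReal.ofReal (if x ∈ Set.Ioo (0 : ℝ) 1 then
      x ^ (a - 1) * (1 - x) ^ (b - 1) / (Real.Gamma a * Real.Gamma b / Real.Gamma (a + b))
    else 0)

/-- Also for `r = 0` and for singular `A`, where both sides are `0`. -/
theorem Matrix.inv_inv_smul {n K : Type*} [Fintype n] [DecidableEq n] [Field K]
    (r : K) (A : Matrix n n K) : (r⁻¹ • A)⁻¹ = r • A⁻¹ := by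
  rcases eq_or_ne r 0 with rfl | hr
  · simp
  by_cases hA : IsUnit A.det
  · have := invertibleOfNonzero (inv_ne_zero hr)
    rw [Matrix.inv_smul _ _ hA, invOf_eq_inv, inv_inv]
  · rw [nonsing_inv_apply_not_isUnit A hA, nonsing_inv_apply_not_isUnit, smul_zero]
    simpa [det_smul, isUnit_iff_ne_zero, hr] using hA

theorem mvGaussian_inv_smul {p : ℕ} (μ : Fin p → ℝ) (S : Matrix (Fin p) (Fin p) ℝ) (r : ℝ) :
    mvGaussian μ (r⁻¹ • S) = volume.withDensity fun y =>
      ENNReal.ofReal ((2 * Real.pi) ^ (-(p : ℝ) / 2) * (r⁻¹ ^ p * S.det) ^ (-(1 : ℝ) / 2) *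
        Real.exp (-(r * ((y - μ) ⬝ᵥ (S⁻¹ *ᵥ (y - μ)))) / 2)) := by
  simp only [mvGaussian, Matrix.inv_inv_smul, det_smul, Fintype.card_fin, smul_mulVec,
    dotProduct_smul, smul_eq_mul]

theorem measurable_mvGaussian_inv_smul_density {p : ℕ} (μ : Fin p → ℝ)
    (S : Matrix (Fin p) (Fin p) ℝ) :
    Measurable (Function.uncurry fun (r : ℝ) (y : Fin p → ℝ) =>
      ENNReal.ofReal ((2 * Real.pi) ^ (-(p : ℝ) / 2) * (r⁻¹ ^ p * S.det) ^ (-(1 : ℝ) / 2) *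
        Real.exp (-(r * ((y - μ) ⬝ᵥ (S⁻¹ *ᵥ (y - μ)))) / 2))) := by
  fun_prop

open ProbabilityTheory in
theorem MeasureTheory.Measure.bind_withDensity_eq_withDensity_lintegral {α β : Type*}
    [MeasurableSpace α] [MeasurableSpace β] (μ : Measure α) [SFinite μ] (ν : Measure β) [SFinite ν]
    {f : α → β → ENNReal} (hf : Measurable (Function.uncurry f)) :
    μ.bind (fun a => ν.withDensity (f a)) = ν.withDensity (fun b => ∫⁻ a, f a b ∂μ) := by
  have hκ : (fun a => ν.withDensity (f a)) = ⇑((Kernel.const α ν).withDensity f) := by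
    ext1 a
    rw [Kernel.withDensity_apply _ hf, Kernel.const_apply]
  ext s hs
  rw [hκ, Measure.bind_apply hs (Kernel.aemeasurable _), withDensity_apply _ hs, ← hκ]
  simp_rw [withDensity_apply _ hs]
  exact lintegral_lintegral_swap hf.aemeasurable

instance betaMeasure.instSFinite (a b : ℝ) : SFinite (betaMeasure a b) := by
  unfold betaMeasure
  infer_instance

theorem lintegral_betaMeasure (a b : ℝ) {g : ℝ → ENNReal} (hg : Measurable g) :
    ∫⁻ x, g x ∂betaMeasure a b = ∫⁻ x in Set.Ioo 0 1,
      ENNReal.ofReal (x ^ (a - 1) * (1 - x) ^ (b - 1) /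
        (Real.Gamma a * Real.Gamma b / Real.Gamma (a + b))) * g x := by
  rw [betaMeasure, lintegral_withDensity_eq_lintegral_mul _ ?_ hg,
    ← lintegral_indicator measurableSet_Ioo]
  · congr 1 with x
    by_cases hx : x ∈ Set.Ioo (0 : ℝ) 1 <;>
      simp only [Pi.mul_apply, Set.indicator, hx, if_true, if_false, ENNReal.ofReal_zero, zero_mul]
  · exact (Measurable.ite measurableSet_Ioo (by fun_prop) measurable_const).ennreal_ofReal

theorem integrableOn_rpow_mul_one_sub_rpow {a b : ℝ} (ha : 0 < a) (hb : 0 < b) :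
    IntegrableOn (fun x : ℝ => x ^ (a - 1) * (1 - x) ^ (b - 1)) (Set.Ioo 0 1) := by
  have hC : IntegrableOn
      (fun x : ℝ => (x : ℂ) ^ ((a : ℂ) - 1) * (1 - (x : ℂ)) ^ ((b : ℂ) - 1)) (Set.Ioo 0 1) :=
    (Complex.betaIntegral_convergent (by simpa using ha) (by simpa using hb)).1.mono_set
      Set.Ioo_subset_Ioc_self
  refine IntegrableOn.congr_fun hC.re (fun x hx => ?_) measurableSet_Ioo
  have h1x : 0 ≤ 1 - x := by linarith [hx.2]
  norm_cast
  rw [← Complex.ofReal_cpow hx.1.le, ← Complex.ofReal_cpow h1x, ← Complex.ofReal_mul,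
    RCLike.re_to_complex, Complex.ofReal_re]

theorem integrableOn_mul_rpow_mul_one_sub_rpow {g : ℝ → ℝ} (hg : ContinuousOn g (Set.Icc 0 1))
    {a b : ℝ} (ha : 0 < a) (hb : 0 < b) :
    IntegrableOn (fun x => g x * x ^ (a - 1) * (1 - x) ^ (b - 1)) (Set.Ioo 0 1) := by
  simpa only [mul_assoc] using
    (integrableOn_rpow_mul_one_sub_rpow ha hb).continuousOn_mul_of_subset hg isCompact_Icc
      measurableSet_Ioo Set.Ioo_subset_Icc_self

theorem inv_pow_mul_rpow_neg_half {r d : ℝ} (hr : 0 < r) (hd : 0 ≤ d) (p : ℕ) :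
    (r⁻¹ ^ p * d) ^ (-(1 : ℝ) / 2) = r ^ ((p : ℝ) / 2) / d ^ ((1 : ℝ) / 2) := by
  rw [Real.mul_rpow (by positivity) hd, neg_div, Real.rpow_neg (by positivity), Real.rpow_neg hd,
    inv_pow, Real.inv_rpow (by positivity), inv_inv, ← Real.rpow_natCast, ← Real.rpow_mul hr.le,
    div_eq_mul_inv]
  ring_nf

theorem beta_density_mul_mvGaussian_inv_smul_density {a b d q r : ℝ} (p : ℕ) (hd : 0 ≤ d)
    (hr : 0 < r) :
    r ^ (a - 1) * (1 - r) ^ (b - 1) / (Real.Gamma a * Real.Gamma b / Real.Gamma (a + b)) *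
        ((2 * Real.pi) ^ (-(p : ℝ) / 2) * (r⁻¹ ^ p * d) ^ (-(1 : ℝ) / 2) *
          Real.exp (-(r * q) / 2)) =
      Real.Gamma (a + b) / ((2 * Real.pi) ^ ((p : ℝ) / 2) * d ^ ((1 : ℝ) / 2) *
          Real.Gamma a * Real.Gamma b) *
        (Real.exp (-r * q / 2) * r ^ (a + (p : ℝ) / 2 - 1) * (1 - r) ^ (b - 1)) := by
  rw [div_div_eq_mul_div, inv_pow_mul_rpow_neg_half hr hd, neg_div,
    Real.rpow_neg (by positivity), show a + (p : ℝ) / 2 - 1 = (a - 1) + p / 2 by ring,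
    Real.rpow_add hr]
  ring_nf

theorem beta_scale_mixture_gaussian_density_general
    (p : ℕ) (μ : Fin p → ℝ) (S : Matrix (Fin p) (Fin p) ℝ) (hS : S.PosDef)
    (α η : ℝ) (hα : 0 < α) (hη : 0 < η) :
    (betaMeasure α η).bind (fun r => mvGaussian μ (r⁻¹ • S)) =
      volume.withDensity (fun y =>
        ENNReal.ofReal (Real.Gamma (α + η) /
            ((2 * Real.pi) ^ ((p : ℝ) / 2) * S.det ^ ((1 : ℝ) / 2) *
              Real.Gamma α * Real.Gamma η) *
          ∫ r in Set.Ioo (0 : ℝ) 1,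
            Real.exp (-r * ((y - μ) ⬝ᵥ (S⁻¹ *ᵥ (y - μ))) / 2) *
              r ^ (α + (p : ℝ) / 2 - 1) * (1 - r) ^ (η - 1))) := by
  simp_rw [mvGaussian_inv_smul]
  rw [Measure.bind_withDensity_eq_withDensity_lintegral _ _
    (measurable_mvGaussian_inv_smul_density μ S)]
  congr 1 with y
  have hint := integrableOn_mul_rpow_mul_one_sub_rpow
    (g := fun r => Real.exp (-r * ((y - μ) ⬝ᵥ (S⁻¹ *ᵥ (y - μ))) / 2)) (by fun_prop)
    (by positivity : 0 < α + (p : ℝ) / 2) hη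
  have hdet := hS.det_pos
  rw [lintegral_betaMeasure _ _ (measurable_mvGaussian_inv_smul_density μ S).of_uncurry_right,
    setLIntegral_congr_fun measurableSet_Ioo fun r ⟨hr0, hr1⟩ => by
      have := sub_pos.2 hr1
      rw [← ENNReal.ofReal_mul (by positivity),
        beta_density_mul_mvGaussian_inv_smul_density p hdet.le hr0],
    ← ofReal_integral_eq_lintegral_ofReal (hint.const_mul _)
      (ae_restrict_of_forall_mem measurableSet_Ioo fun r ⟨hr0, hr1⟩ => by
        have := sub_pos.2 hr1
        positivity),
    integral_const_mul]

/-- If `R ~ Beta(α, η)` and `Y | R = r ~ N_p(μ, r⁻¹ Σ)`, then `Y` has Lebesgue density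
`y ↦ Γ(α+η)/((2π)^(p/2) (det Σ)^(1/2) Γ(α) Γ(η)) ·
  ∫_0^1 e^(−r (y−μ)ᵀΣ⁻¹(y−μ)/2) r^(α+p/2−1) (1−r)^(η−1) dr`. -/
theorem beta_scale_mixture_gaussian_density
    (p : ℕ) (hp : 1 ≤ p) (μ : Fin p → ℝ) (S : Matrix (Fin p) (Fin p) ℝ) (hS : S.PosDef)
    (α η : ℝ) (hα : 0 < α) (hη : 0 < η) :
    (betaMeasure α η).bind (fun r => mvGaussian μ (r⁻¹ • S)) =
      volume.withDensity (fun y =>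
        ENNReal.ofReal (Real.Gamma (α + η) /
            ((2 * Real.pi) ^ ((p : ℝ) / 2) * S.det ^ ((1 : ℝ) / 2) *
              Real.Gamma α * Real.Gamma η) *
          ∫ r in Set.Ioo (0 : ℝ) 1,
            Real.exp (-r * ((y - μ) ⬝ᵥ (S⁻¹ *ᵥ (y - μ))) / 2) *
              r ^ (α + (p : ℝ) / 2 - 1) * (1 - r) ^ (η - 1))) :=
  beta_scale_mixture_gaussian_density_general p μ S hS α η hα hη
end

section
/- Let α > 0 and λ > 0. Let the law of the random variable U on (0,∞) be the Gamma mixture (Gamma(λ, rate 1/2)).bind (fun v => Gamma(α, rate 1/(2v))), i.e. V ~ Gamma(shape λ, scale 2) and conditionally on V = v, U ~ Gamma(shape α, scale 2v). Then U is absolutely continuous with respect to Lebesgue measure with density f(u) = ( 2^{−(λ+α)} / (Γ(α) Γ(λ)) ) · u^{α−1} · ∫_0^∞ v^{λ−α−1} e^{−(u/v + v)/2} dv for u > 0. (This is Theorem A.2 of the paper; the inner integral equals 2 u^{(λ−α)/2} K_{α−λ}(√u), where K is the modified Bessel function of the second kind.) -/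
open MeasureTheory ProbabilityTheory Real Set
open scoped ENNReal Nat

/-!
Disintegrating the mixture over `V`, the law of `U` has density
`u ↦ ∫ f_V(v) f_{U|V=v}(u) dv` (Tonelli). For `u, v > 0` the product of the two gamma densities
is `2^(-(λ+α)) / (Γ(α) Γ(λ)) · u^(α-1) · v^(λ-α-1) e^(-(u/v+v)/2)`, and the remaining
`v`-integral converges because `e^(-u/(2v)) ≤ n! (2v/u)^n` tames any power of `v` at `0`.
-/

lemma Real.exp_neg_le_factorial_div_pow {x : ℝ} (hx : 0 < x) (n : ℕ) :
    exp (-x) ≤ n ! / x ^ n := by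
  rw [exp_neg, inv_le_comm₀ (exp_pos x) (by positivity), inv_div]
  exact pow_div_factorial_le_exp _ hx.le n

lemma integrableOn_rpow_mul_exp_neg_div_add_div_two (p : ℝ) {u : ℝ} (hu : 0 < u) :
    IntegrableOn (fun v => v ^ p * exp (-(u / v + v) / 2)) (Ioi 0) := by
  obtain ⟨n, hn⟩ := exists_nat_gt (-1 - p)
  have hdom : IntegrableOn (fun v : ℝ => n ! * (2 / u) ^ n * (v ^ (p + n) * exp (-(1 / 2) * v)))
      (Ioi 0) := by
    have h := integrableOn_rpow_mul_exp_neg_mul_rpow (p := 1) (s := p + n) (b := 1 / 2)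
      (by linarith) one_pos one_half_pos
    simp only [rpow_one] at h
    exact h.const_mul _
  refine hdom.mono' (by fun_prop) <| (ae_restrict_iff' measurableSet_Ioi).mpr <|
    ae_of_all _ fun v (hv : 0 < v) => ?_
  have hsplit : exp (-(u / v + v) / 2) = exp (-(u / (2 * v))) * exp (-(1 / 2) * v) := by
    rw [← exp_add]; ring_nf
  rw [Real.norm_of_nonneg (by positivity), hsplit, rpow_add_natCast hv.ne']
  calc v ^ p * (exp (-(u / (2 * v))) * exp (-(1 / 2) * v))
      ≤ v ^ p * (n ! / (u / (2 * v)) ^ n * exp (-(1 / 2) * v)) := by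
        gcongr; exact exp_neg_le_factorial_div_pow (by positivity) n
    _ = n ! * (2 / u) ^ n * (v ^ p * v ^ n * exp (-(1 / 2) * v)) := by
        rw [div_pow, div_pow, mul_pow]
        field_simp

theorem MeasureTheory.Measure.bind_withDensity {α β : Type*} [MeasurableSpace α]
    [MeasurableSpace β] (μ : Measure α) (ν : Measure β) [SFinite μ] [SFinite ν]
    {f : α → β → ℝ≥0∞} (hf : Measurable (Function.uncurry f)) :
    μ.bind (fun a => ν.withDensity (f a)) = ν.withDensity (fun b => ∫⁻ a, f a b ∂μ) := by
  have hκ : Measurable fun a => ν.withDensity (f a) := by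
    refine Measure.measurable_of_measurable_coe _ fun s hs => ?_
    simp_rw [withDensity_apply _ hs]
    exact hf.lintegral_prod_right'
  ext s hs
  rw [Measure.bind_apply hs hκ.aemeasurable, withDensity_apply _ hs]
  simp_rw [withDensity_apply _ hs]
  exact lintegral_lintegral_swap hf.aemeasurable

lemma measurable_gammaPDF_rate_inv_two_mul (a : ℝ) :
    Measurable (Function.uncurry fun v u => gammaPDF a (1 / (2 * v)) u) := by
  refine Measurable.ennreal_ofReal <|
    Measurable.ite (measurableSet_le measurable_const measurable_snd) ?_ measurable_const
  fun_prop

lemma gammaPDFReal_half_mul_gammaPDFReal_rate_inv_two_mul (α lam : ℝ) {u v : ℝ} (hu : 0 ≤ u)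
    (hv : 0 < v) :
    gammaPDFReal lam (1 / 2) v * gammaPDFReal α (1 / (2 * v)) u =
      (2 : ℝ) ^ (-(lam + α)) / (Gamma α * Gamma lam) * u ^ (α - 1) *
        (v ^ (lam - α - 1) * exp (-(u / v + v) / 2)) := by
  have h2 : (0 : ℝ) < 2 := two_pos
  have hrate_lam : ((1 : ℝ) / 2) ^ lam = 2 ^ (-lam) := by
    rw [one_div, inv_rpow h2.le, rpow_neg h2.le]
  have hrate_α : ((1 : ℝ) / (2 * v)) ^ α = 2 ^ (-α) * v ^ (-α) := by
    rw [one_div, inv_rpow (by positivity), mul_rpow h2.le hv.le, mul_inv, rpow_neg h2.le,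
      rpow_neg hv.le]
  have hexp : exp (-(1 / 2 * v)) * exp (-(1 / (2 * v) * u)) = exp (-(u / v + v) / 2) := by
    rw [← exp_add]; congr 1; field_simp; ring
  have hpow_v : v ^ (lam - 1) * v ^ (-α) = v ^ (lam - α - 1) := by
    rw [← rpow_add hv]; ring_nf
  have hpow_2 : (2 : ℝ) ^ (-lam) * 2 ^ (-α) = 2 ^ (-(lam + α)) := by
    rw [← rpow_add h2]; ring_nf
  rw [gammaPDFReal, gammaPDFReal, if_pos hv.le, if_pos hu, hrate_lam, hrate_α, ← hexp,
    ← hpow_v, ← hpow_2]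
  ring

lemma lintegral_gammaPDF_half_mul_gammaPDF_rate_inv_two_mul {α lam : ℝ} (hα : 0 < α)
    (hlam : 0 < lam) {u : ℝ} (hu : 0 < u) :
    ∫⁻ v, gammaPDF lam (1 / 2) v * gammaPDF α (1 / (2 * v)) u =
      ENNReal.ofReal ((2 : ℝ) ^ (-(lam + α)) / (Gamma α * Gamma lam) * u ^ (α - 1) *
        ∫ v in Ioi 0, v ^ (lam - α - 1) * exp (-(u / v + v) / 2)) := by
  set C := (2 : ℝ) ^ (-(lam + α)) / (Gamma α * Gamma lam) * u ^ (α - 1)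
  have hC : 0 ≤ C := by
    have := Gamma_pos_of_pos hα
    have := Gamma_pos_of_pos hlam
    positivity
  have hsupp : (fun v => gammaPDF lam (1 / 2) v * gammaPDF α (1 / (2 * v)) u).support ⊆ Ici 0 :=
    fun v hv => mem_Ici.mpr <| not_lt.mp fun hneg => hv (by simp [gammaPDF_of_neg hneg])
  have hnonneg : 0 ≤ᵐ[volume.restrict (Ioi 0)]
      fun v => C * (v ^ (lam - α - 1) * exp (-(u / v + v) / 2)) :=
    (ae_restrict_iff' measurableSet_Ioi).mpr <| ae_of_all _ fun v (hv : 0 < v) => by positivity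
  rw [← setLIntegral_eq_of_support_subset hsupp, ← restrict_Ioi_eq_restrict_Ici,
    ← integral_const_mul, ofReal_integral_eq_lintegral_ofReal
      ((integrableOn_rpow_mul_exp_neg_div_add_div_two _ hu).const_mul C) hnonneg]
  refine setLIntegral_congr_fun measurableSet_Ioi fun v (hv : 0 < v) => ?_
  rw [gammaPDF, gammaPDF, ← ENNReal.ofReal_mul (gammaPDFReal_nonneg hlam one_half_pos v),
    gammaPDFReal_half_mul_gammaPDFReal_rate_inv_two_mul α lam hu.le hv]

/-- If `V ~ Gamma(shape λ, scale 2)` and `U | V = v ~ Gamma(shape α, scale 2v)`, then `U`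
has Lebesgue density
`u ↦ 2^(−(λ+α))/(Γ(α)Γ(λ)) · u^(α−1) · ∫_0^∞ v^(λ−α−1) e^(−(u/v+v)/2) dv` on `(0,∞)`. -/
theorem gamma_mixture_density
    (α lam : ℝ) (hα : 0 < α) (hlam : 0 < lam) :
    (gammaMeasure lam (1 / 2)).bind (fun v => gammaMeasure α (1 / (2 * v))) =
      volume.withDensity (fun u =>
        ENNReal.ofReal (if 0 < u then
          (2 : ℝ) ^ (-(lam + α)) / (Real.Gamma α * Real.Gamma lam) * u ^ (α - 1) *
            ∫ v in Set.Ioi (0 : ℝ), v ^ (lam - α - 1) * Real.exp (-(u / v + v) / 2)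
        else 0)) := by
  have hκ := measurable_gammaPDF_rate_inv_two_mul α
  simp only [gammaMeasure]
  rw [Measure.bind_withDensity _ _ hκ]
  -- at `u = 0` the two densities can differ (e.g. for `α = 1`)
  refine withDensity_congr_ae <| (Measure.ae_ne volume 0).mono fun u hu0 => ?_
  have hpdf : Measurable (gammaPDF lam (1 / 2)) := (measurable_gammaPDFReal _ _).ennreal_ofReal
  have hslice : Measurable fun v => gammaPDF α (1 / (2 * v)) u := hκ.comp measurable_prodMk_right
  dsimp only
  rw [lintegral_withDensity_eq_lintegral_mul _ hpdf hslice, Pi.mul_def]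
  rcases hu0.lt_or_gt with hneg | hpos
  · simp [gammaPDF_of_neg hneg, hneg.not_gt]
  · rw [if_pos hpos]
    exact lintegral_gammaPDF_half_mul_gammaPDF_rate_inv_two_mul hα hlam hpos
end

section
/- Let α > 0 and λ > 0, and let the law of U be the Gamma mixture (Gamma(λ, rate 1/2)).bind (fun v => Gamma(α, rate 1/(2v))). Then for every natural number m, the m-th moment of U is finite and equals E[U^m] = 2^{2m} Γ(m+α) Γ(λ+m) / ( Γ(α) Γ(λ) ). -/
/-!
Multiplying the `Gamma(a, r)` density by `xⁿ` gives `Γ(a+n) / (Γ(a) rⁿ)` times the `Gamma(a+n, r)`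
density, so the `n`-th moment of `Gamma(a, r)` is `Γ(a+n) / (Γ(a) rⁿ)`. Hence conditionally on
`V = v` the `m`-th moment of `U` is `Γ(α+m) / Γ(α) · (2v)ᵐ`, and averaging over `V ~ Gamma(λ, 1/2)`
gives the formula. All moments are computed as lower Lebesgue integrals; since `U > 0` almost
surely, finiteness of that integral is integrability of `uᵐ` and its value is the Bochner integral.
-/

open MeasureTheory ProbabilityTheory

open Real

lemma measurable_gammaPDF (a r : ℝ) : Measurable (gammaPDF a r) :=
  (measurable_gammaPDFReal a r).ennreal_ofReal

lemma ae_pos_gammaMeasure (a r : ℝ) : ∀ᵐ x ∂gammaMeasure a r, 0 < x := by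
  rw [gammaMeasure, ae_withDensity_iff (measurable_gammaPDF a r)]
  filter_upwards [Measure.ae_ne volume 0] with x hx0 hpdf
  exact hx0.lt_or_gt.resolve_left fun hneg => hpdf (gammaPDF_of_neg hneg)

lemma measurable_gammaMeasure_rate (a : ℝ) : Measurable fun r => gammaMeasure a r := by
  refine Measure.measurable_of_measurable_coe _ fun s hs => ?_
  simp_rw [gammaMeasure, withDensity_apply _ hs]
  refine Measurable.lintegral_prod_right' (f := fun p : ℝ × ℝ => gammaPDF a p.1 p.2) ?_
  exact (Measurable.ite (measurableSet_le measurable_const measurable_snd) (by fun_prop)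
    measurable_const).ennreal_ofReal

lemma ofReal_pow_mul_gammaPDF {a r x : ℝ} (ha : 0 < a) (hr : 0 < r) (hx : x ≠ 0) (n : ℕ) :
    ENNReal.ofReal (x ^ n) * gammaPDF a r x =
      ENNReal.ofReal (Gamma (a + n) / (Gamma a * r ^ n)) * gammaPDF (a + n) r x := by
  rcases hx.lt_or_gt with hneg | hpos
  · simp [gammaPDF_of_neg hneg]
  have hΓa := (Gamma_pos_of_pos ha).ne'
  have hΓan := (Gamma_pos_of_pos (by positivity : 0 < a + n)).ne'
  rw [gammaPDF_of_nonneg hpos.le, gammaPDF_of_nonneg hpos.le, ← ENNReal.ofReal_mul (by positivity),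
    ← ENNReal.ofReal_mul (by positivity)]
  congr 1
  rw [show a + n - 1 = (a - 1) + n by ring, rpow_add_natCast hpos.ne', rpow_add_natCast hr.ne']
  field_simp

lemma lintegral_gammaMeasure_pow {a r : ℝ} (ha : 0 < a) (hr : 0 < r) (n : ℕ) :
    ∫⁻ x, ENNReal.ofReal (x ^ n) ∂gammaMeasure a r =
      ENNReal.ofReal (Gamma (a + n) / (Gamma a * r ^ n)) := by
  rw [gammaMeasure, lintegral_withDensity_eq_lintegral_mul _ (measurable_gammaPDF a r)
    (by fun_prop)]
  calc ∫⁻ x, (gammaPDF a r * fun x => ENNReal.ofReal (x ^ n)) x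
      = ∫⁻ x, ENNReal.ofReal (Gamma (a + n) / (Gamma a * r ^ n)) * gammaPDF (a + n) r x := by
        refine lintegral_congr_ae ?_
        filter_upwards [Measure.ae_ne volume 0] with x hx
        rw [Pi.mul_apply, mul_comm, ofReal_pow_mul_gammaPDF ha hr hx]
    _ = _ := by
        rw [lintegral_const_mul _ (measurable_gammaPDF _ r),
          lintegral_gammaPDF_eq_one (by positivity) hr, mul_one]

lemma lintegral_bind_gammaMeasure_pow {μ : Measure ℝ} (hμ : ∀ᵐ v ∂μ, 0 < v) {a s : ℝ}
    (ha : 0 < a) (hs : 0 < s) (n : ℕ) :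
    ∫⁻ u, ENNReal.ofReal (u ^ n) ∂μ.bind (fun v => gammaMeasure a (1 / (s * v))) =
      ENNReal.ofReal (Gamma (a + n) / Gamma a * s ^ n) * ∫⁻ v, ENNReal.ofReal (v ^ n) ∂μ := by
  have hker : Measurable fun v : ℝ => gammaMeasure a (1 / (s * v)) :=
    (measurable_gammaMeasure_rate a).comp (by fun_prop)
  rw [Measure.lintegral_bind hker.aemeasurable (by fun_prop),
    ← lintegral_const_mul _ (by fun_prop)]
  refine lintegral_congr_ae ?_
  filter_upwards [hμ] with v hv
  rw [lintegral_gammaMeasure_pow ha (by positivity), ← ENNReal.ofReal_mul (by positivity)]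
  congr 1
  rw [one_div, inv_pow, mul_pow]
  field_simp

lemma ae_pos_bind_gammaMeasure (μ : Measure ℝ) (a : ℝ) {f : ℝ → ℝ} (hf : Measurable f) :
    ∀ᵐ u ∂μ.bind (fun v => gammaMeasure a (f v)), 0 < u :=
  Measure.ae_comp_of_ae_ae (κ := ⟨_, (measurable_gammaMeasure_rate a).comp hf⟩)
    measurableSet_Ioi (ae_of_all _ fun v => ae_pos_gammaMeasure a (f v))

/-- For the Gamma mixture `V ~ Gamma(λ, scale 2)`, `U | V = v ~ Gamma(α, scale 2v)`,
the `m`-th moment of `U` is finite and equals `2^(2m) Γ(m+α) Γ(λ+m) / (Γ(α) Γ(λ))`. -/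
theorem gamma_mixture_moments
    (α lam : ℝ) (hα : 0 < α) (hlam : 0 < lam) (m : ℕ) :
    Integrable (fun u : ℝ => u ^ m)
        ((gammaMeasure lam (1 / 2)).bind (fun v => gammaMeasure α (1 / (2 * v)))) ∧
      ∫ u, u ^ m ∂((gammaMeasure lam (1 / 2)).bind (fun v => gammaMeasure α (1 / (2 * v)))) =
        2 ^ (2 * m) * Real.Gamma (m + α) * Real.Gamma (lam + m) /
          (Real.Gamma α * Real.Gamma lam) := by
  set μ := (gammaMeasure lam (1 / 2)).bind (fun v => gammaMeasure α (1 / (2 * v)))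
  have hmoment : ∫⁻ u, ENNReal.ofReal (u ^ m) ∂μ = ENNReal.ofReal
      (2 ^ (2 * m) * Gamma (m + α) * Gamma (lam + m) / (Gamma α * Gamma lam)) := by
    rw [lintegral_bind_gammaMeasure_pow (ae_pos_gammaMeasure lam _) hα two_pos,
      lintegral_gammaMeasure_pow hlam (by norm_num), ← ENNReal.ofReal_mul (by positivity)]
    congr 1
    rw [one_div, inv_pow, pow_mul', add_comm α]
    field_simp
  have hnonneg : 0 ≤ᵐ[μ] fun u => u ^ m :=
    (ae_pos_bind_gammaMeasure _ α (by fun_prop)).mono fun u hu => pow_nonneg hu.le m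
  have hmeas : AEStronglyMeasurable (fun u : ℝ => u ^ m) μ := by fun_prop
  refine ⟨⟨hmeas, (hasFiniteIntegral_iff_ofReal hnonneg).2 (hmoment ▸ ENNReal.ofReal_lt_top)⟩, ?_⟩
  rw [integral_eq_lintegral_of_nonneg_ae hnonneg hmeas, hmoment,
    ENNReal.toReal_ofReal (by positivity)]
end

section
/- Let X be a real k×p matrix such that XᵀX is invertible, and let W be a k×k real positive definite matrix such that XᵀW⁻¹X is invertible. Then the matrix (XᵀX)⁻¹ Xᵀ W X (XᵀX)⁻¹ − (Xᵀ W⁻¹ X)⁻¹ is positive semidefinite. (This is the paper's claim that the weighted complete sketch estimator β_s* is at least as efficient as β_s: var(β_s*) ⪯ var(β_s).) -/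
open Matrix

/-- The weighted complete sketch estimator is at least as efficient:
`(XᵀX)⁻¹ Xᵀ W X (XᵀX)⁻¹ − (Xᵀ W⁻¹ X)⁻¹` is positive semidefinite. -/
theorem var_weighted_sketch_le_var_sketch
    {k p : ℕ} (X : Matrix (Fin k) (Fin p) ℝ) (W : Matrix (Fin k) (Fin k) ℝ)
    (hW : W.PosDef)
    (hX : IsUnit (Xᵀ * X))
    (hXW : IsUnit (Xᵀ * W⁻¹ * X)) :
    ((Xᵀ * X)⁻¹ * (Xᵀ * W * X) * (Xᵀ * X)⁻¹ - (Xᵀ * W⁻¹ * X)⁻¹).PosSemidef := by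
  set M : Matrix (Fin p) (Fin k) ℝ :=
    (Xᵀ * X)⁻¹ * Xᵀ - (Xᵀ * W⁻¹ * X)⁻¹ * Xᵀ * W⁻¹ with hM
  have key : ((Xᵀ * X)⁻¹ * (Xᵀ * W * X) * (Xᵀ * X)⁻¹ - (Xᵀ * W⁻¹ * X)⁻¹)
      = M * W * Mᴴ := by
    have hWdet : IsUnit W.det := isUnit_iff_ne_zero.mpr hW.det_pos.ne'
    have hWsym : Wᵀ = W := hW.isHermitian.eq
    have hWinvsym : W⁻¹ᵀ = W⁻¹ := by rw [transpose_nonsing_inv, hWsym]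
    have hWW : W * W⁻¹ = 1 := mul_nonsing_inv W hWdet
    have hWW' : W⁻¹ * W = 1 := nonsing_inv_mul W hWdet
    have hXdet : IsUnit (Xᵀ * X).det := (isUnit_iff_isUnit_det _).mp hX
    have hXXsym : ((Xᵀ * X)⁻¹)ᵀ = (Xᵀ * X)⁻¹ := by
      rw [transpose_nonsing_inv, transpose_mul, transpose_transpose]
    have hXWdet : IsUnit (Xᵀ * W⁻¹ * X).det := (isUnit_iff_isUnit_det _).mp hXW
    have hXWsym : ((Xᵀ * W⁻¹ * X)⁻¹)ᵀ = (Xᵀ * W⁻¹ * X)⁻¹ := by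
      rw [transpose_nonsing_inv]
      congr 1
      rw [transpose_mul, transpose_mul, transpose_transpose, hWinvsym, ← Matrix.mul_assoc]
    have hXX1 : (Xᵀ * X)⁻¹ * (Xᵀ * X) = 1 := nonsing_inv_mul _ hXdet
    have hXX2 : (Xᵀ * X) * (Xᵀ * X)⁻¹ = 1 := mul_nonsing_inv _ hXdet
    have hXW1 : (Xᵀ * W⁻¹ * X)⁻¹ * (Xᵀ * W⁻¹ * X) = 1 := nonsing_inv_mul _ hXWdet
    have hMt : Mᴴ = X * (Xᵀ * X)⁻¹ - W⁻¹ * X * (Xᵀ * W⁻¹ * X)⁻¹ := by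
      rw [hM]
      simp only [conjTranspose_eq_transpose_of_trivial, transpose_sub, transpose_mul,
        transpose_transpose, hXXsym, hXWsym, hWinvsym, ← Matrix.mul_assoc]
    rw [hMt, hM]
    rw [Matrix.sub_mul, Matrix.sub_mul, Matrix.mul_sub, Matrix.mul_sub]
    have e1 : (Xᵀ * X)⁻¹ * Xᵀ * W * (X * (Xᵀ * X)⁻¹)
        = (Xᵀ * X)⁻¹ * (Xᵀ * W * X) * (Xᵀ * X)⁻¹ := by
      simp only [Matrix.mul_assoc]
    have e2 : (Xᵀ * X)⁻¹ * Xᵀ * W * (W⁻¹ * X * (Xᵀ * W⁻¹ * X)⁻¹)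
        = (Xᵀ * W⁻¹ * X)⁻¹ := by
      calc (Xᵀ * X)⁻¹ * Xᵀ * W * (W⁻¹ * X * (Xᵀ * W⁻¹ * X)⁻¹)
          = (Xᵀ * X)⁻¹ * Xᵀ * (W * W⁻¹) * X * (Xᵀ * W⁻¹ * X)⁻¹ := by
            simp only [Matrix.mul_assoc]
        _ = (Xᵀ * X)⁻¹ * Xᵀ * X * (Xᵀ * W⁻¹ * X)⁻¹ := by
            rw [hWW, Matrix.mul_one]
        _ = (Xᵀ * W⁻¹ * X)⁻¹ := by
            rw [Matrix.mul_assoc (Xᵀ * X)⁻¹ Xᵀ X, hXX1, Matrix.one_mul]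
    have e3 : (Xᵀ * W⁻¹ * X)⁻¹ * Xᵀ * W⁻¹ * W * (X * (Xᵀ * X)⁻¹)
        = (Xᵀ * W⁻¹ * X)⁻¹ := by
      calc (Xᵀ * W⁻¹ * X)⁻¹ * Xᵀ * W⁻¹ * W * (X * (Xᵀ * X)⁻¹)
          = (Xᵀ * W⁻¹ * X)⁻¹ * Xᵀ * (W⁻¹ * W) * X * (Xᵀ * X)⁻¹ := by
            simp only [Matrix.mul_assoc]
        _ = (Xᵀ * W⁻¹ * X)⁻¹ * Xᵀ * X * (Xᵀ * X)⁻¹ := by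
            rw [hWW', Matrix.mul_one]
        _ = (Xᵀ * W⁻¹ * X)⁻¹ := by
            rw [Matrix.mul_assoc ((Xᵀ * W⁻¹ * X)⁻¹ * Xᵀ) X (Xᵀ * X)⁻¹,
              Matrix.mul_assoc (Xᵀ * W⁻¹ * X)⁻¹ Xᵀ (X * (Xᵀ * X)⁻¹),
              ← Matrix.mul_assoc Xᵀ X (Xᵀ * X)⁻¹, hXX2, Matrix.mul_one]
    have e4 : (Xᵀ * W⁻¹ * X)⁻¹ * Xᵀ * W⁻¹ * W * (W⁻¹ * X * (Xᵀ * W⁻¹ * X)⁻¹)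
        = (Xᵀ * W⁻¹ * X)⁻¹ := by
      calc (Xᵀ * W⁻¹ * X)⁻¹ * Xᵀ * W⁻¹ * W * (W⁻¹ * X * (Xᵀ * W⁻¹ * X)⁻¹)
          = (Xᵀ * W⁻¹ * X)⁻¹ * Xᵀ * (W⁻¹ * W) * W⁻¹ * X * (Xᵀ * W⁻¹ * X)⁻¹ := by
            simp only [Matrix.mul_assoc]
        _ = (Xᵀ * W⁻¹ * X)⁻¹ * Xᵀ * W⁻¹ * X * (Xᵀ * W⁻¹ * X)⁻¹ := by
            rw [hWW', Matrix.mul_one]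
        _ = (Xᵀ * W⁻¹ * X)⁻¹ := by
            rw [Matrix.mul_assoc (Xᵀ * W⁻¹ * X)⁻¹ Xᵀ W⁻¹,
              Matrix.mul_assoc (Xᵀ * W⁻¹ * X)⁻¹ (Xᵀ * W⁻¹) X, hXW1, Matrix.one_mul]
    rw [e1, e2, e3, e4]
    abel
  rw [key]
  exact hW.posSemidef.mul_mul_conjTranspose_same M
end

section
/- Let X be a real k×p matrix such that XᵀX is invertible, and let W be a k×k real positive definite matrix such that XᵀW⁻¹X is invertible. Then the 2p×2p block matrix [[A, B],[Bᵀ, D]] with A = (XᵀW⁻¹X)⁻¹, B = (XᵀW⁻¹X)⁻¹, and D = (XᵀX)⁻¹ Xᵀ W X (XᵀX)⁻¹ is positive semidefinite. (This is the block matrix constructed in the paper's efficiency argument for the weighted complete sketch estimator.) -/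
/-!
Write `S = Xᵀ W⁻¹ X`, `P = W⁻¹ X S⁻¹` and `Q = X (XᵀX)⁻¹`, so that `Pᵀ` and `Qᵀ` are the
weighted and the ordinary least-squares estimators. Since `Xᵀ P = Xᵀ Q = 1` and `W P = X S⁻¹`,
the block matrix is the Gram matrix `[P Q]ᵀ W [P Q]`, which is positive semidefinite because
`W` is.
-/

open Matrix

namespace Matrix

variable {m n₁ n₂ R : Type*} [Fintype m]

theorem PosSemidef.fromBlocks_conjTranspose_mul_mul_same [Fintype n₁] [Fintype n₂]
    [CommRing R] [PartialOrder R] [StarRing R] [StarOrderedRing R]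
    {W : Matrix m m R} (hW : W.PosSemidef) (P : Matrix m n₁ R) (Q : Matrix m n₂ R) :
    (fromBlocks (Pᴴ * W * P) (Pᴴ * W * Q) (Qᴴ * W * P) (Qᴴ * W * Q)).PosSemidef := by
  have := hW.conjTranspose_mul_mul_same (fromCols P Q)
  rwa [conjTranspose_fromCols_eq_fromRows_conjTranspose, fromRows_mul,
    fromRows_mul_fromCols] at this

theorem transpose_mul_mul_eq_of_mul_eq [Fintype n₁] [DecidableEq n₁] [CommSemiring R]
    {W : Matrix m m R} {X : Matrix m n₁ R} {P : Matrix m n₂ R} {Q : Matrix m n₁ R}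
    {C : Matrix n₁ n₂ R} (hWP : W * P = X * C) (hXQ : Xᵀ * Q = 1) : Qᵀ * W * P = C := by
  rw [Matrix.mul_assoc, hWP, ← Matrix.mul_assoc, ← transpose_transpose X, ← transpose_mul, hXQ,
    transpose_one, Matrix.one_mul]

end Matrix

/-- The block matrix `[[A, B], [Bᵀ, D]]` with `A = B = (Xᵀ W⁻¹ X)⁻¹` and
`D = (XᵀX)⁻¹ Xᵀ W X (XᵀX)⁻¹` is positive semidefinite. -/
theorem blockMatrix_posSemidef_sketch
    {k p : ℕ} (X : Matrix (Fin k) (Fin p) ℝ) (W : Matrix (Fin k) (Fin k) ℝ)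
    (hW : W.PosDef)
    (hX : IsUnit (Xᵀ * X))
    (hXW : IsUnit (Xᵀ * W⁻¹ * X)) :
    (Matrix.fromBlocks
      ((Xᵀ * W⁻¹ * X)⁻¹)
      ((Xᵀ * W⁻¹ * X)⁻¹)
      (((Xᵀ * W⁻¹ * X)⁻¹)ᵀ)
      ((Xᵀ * X)⁻¹ * (Xᵀ * W * X) * (Xᵀ * X)⁻¹)).PosSemidef := by
  set S := Xᵀ * W⁻¹ * X
  have hWsymm : W.IsSymm := isHermitian_iff_isSymm.mp hW.isHermitian
  have hSsymm : S⁻¹.IsSymm := by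
    refine IsSymm.inv ?_
    simpa using (hW.inv.posSemidef.conjTranspose_mul_mul_same X).isHermitian
  set P := W⁻¹ * X * S⁻¹ with hP
  set Q := X * (Xᵀ * X)⁻¹ with hQ
  have hWP : W * P = X * S⁻¹ := by
    rw [hP, Matrix.mul_assoc, ← Matrix.mul_assoc W,
      mul_nonsing_inv _ ((isUnit_iff_isUnit_det W).mp hW.isUnit), Matrix.one_mul]
  have hXP : Xᵀ * P = 1 := by
    rw [hP, ← Matrix.mul_assoc, ← Matrix.mul_assoc]
    exact mul_nonsing_inv _ ((isUnit_iff_isUnit_det _).mp hXW)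
  have hXQ : Xᵀ * Q = 1 := by
    rw [hQ, ← Matrix.mul_assoc]; exact mul_nonsing_inv _ ((isUnit_iff_isUnit_det _).mp hX)
  have hPWP : Pᵀ * W * P = S⁻¹ := transpose_mul_mul_eq_of_mul_eq hWP hXP
  have hQWP : Qᵀ * W * P = S⁻¹ := transpose_mul_mul_eq_of_mul_eq hWP hXQ
  have hPWQ : Pᵀ * W * Q = S⁻¹ := by
    rw [← hSsymm.eq, ← hQWP]; simp [Matrix.mul_assoc, hWsymm.eq]
  have hQWQ : Qᵀ * W * Q = (Xᵀ * X)⁻¹ * (Xᵀ * W * X) * (Xᵀ * X)⁻¹ := by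
    simp [Q, transpose_nonsing_inv, Matrix.mul_assoc]
  simpa [hPWP, hQWP, hPWQ, hQWQ, hSsymm.eq] using
    hW.posSemidef.fromBlocks_conjTranspose_mul_mul_same P Q
end

section
/- Let n, k, p be natural numbers with n > p and k > p. Let the law of the random variable U on (0,∞) be the Gamma mixture (Gamma((n−p)/2, rate 1/2)).bind (fun v => Gamma((k−p)/2, rate 1/(2v))), i.e. V ~ χ²_{n−p} and conditionally on V = v, U ~ Gamma(shape (k−p)/2, scale 2v). Then U has Lebesgue density h(u) = ( 2^{−(n+k−2p)/2} / ( Γ((k−p)/2) Γ((n−p)/2) ) ) · u^{(k−p)/2−1} · ∫_0^∞ v^{(n−k)/2−1} e^{−(u/v + v)/2} dv for u > 0. (This is the paper's unconditional distribution of the sketched residual sum of squares SSR_s/σ², equation (9), with the modified Bessel function K_{(k−n)/2}(√u) written via its integral representation.) -/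
/-!
By Tonelli the mixture has density `L u = ∫⁻ v, gammaPDF a (1/2) v * gammaPDF b (1/(2v)) u`, and
for `u, v > 0` the product of the two Gamma densities is the stated constant times
`u ^ (b - 1) * v ^ (a - b - 1) * exp (-(u / v + v) / 2)`. Turning the lower integral into the Bochner
integral of the statement requires `L u < ∞`; this holds for almost every `u` because the mixture
is a probability measure, and a density only matters almost everywhere.
-/

open MeasureTheory ProbabilityTheory Real Set
open scoped ENNReal

namespace MeasureTheory.Measure

variable {α β : Type*} [MeasurableSpace α] [MeasurableSpace β] {ν : Measure β} [SFinite ν]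
  {g : α → β → ℝ≥0∞}

lemma measurable_withDensity_of_measurable_uncurry (hg : Measurable (Function.uncurry g)) :
    Measurable fun x => ν.withDensity (g x) := by
  have hκ : ⇑(Kernel.withDensity (Kernel.const α ν) g) = fun x => ν.withDensity (g x) := by
    funext x; rw [Kernel.withDensity_apply _ hg, Kernel.const_apply]
  exact hκ ▸ Kernel.measurable _

lemma withDensity_bind_withDensity {μ : Measure α} [SFinite μ] {f : α → ℝ≥0∞}
    (hf : Measurable f) (hg : Measurable (Function.uncurry g)) :
    (μ.withDensity f).bind (fun x => ν.withDensity (g x)) =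
      ν.withDensity fun y => ∫⁻ x, f x * g x y ∂μ := by
  ext s hs
  have hgs : Measurable fun x => ν.withDensity (g x) s :=
    (measurable_coe hs).comp (measurable_withDensity_of_measurable_uncurry hg)
  rw [bind_apply hs (measurable_withDensity_of_measurable_uncurry hg).aemeasurable,
    lintegral_withDensity_eq_lintegral_mul μ hf hgs, withDensity_apply _ hs]
  calc ∫⁻ x, f x * ν.withDensity (g x) s ∂μ
      = ∫⁻ x, ∫⁻ y in s, f x * g x y ∂ν ∂μ := by
        refine lintegral_congr fun x => ?_
        rw [withDensity_apply _ hs, lintegral_const_mul _ hg.of_uncurry_left]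
    _ = ∫⁻ y in s, ∫⁻ x, f x * g x y ∂μ ∂ν :=
        lintegral_lintegral_swap ((hf.comp measurable_fst).mul hg).aemeasurable

lemma ae_lt_top_of_isFiniteMeasure_withDensity {μ : Measure α} {f : α → ℝ≥0∞}
    (hf : AEMeasurable f μ) [IsFiniteMeasure (μ.withDensity f)] : ∀ᵐ x ∂μ, f x < ∞ :=
  ae_lt_top' hf <| by
    rw [← setLIntegral_univ, ← withDensity_apply _ MeasurableSet.univ]; exact measure_ne_top _ _

end MeasureTheory.Measure

lemma measurable_gammaPDF_of_measurable_rate {α : Type*} [MeasurableSpace α] (a : ℝ) {r : α → ℝ}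
    (hr : Measurable r) : Measurable (Function.uncurry fun x y => gammaPDF a (r x) y) :=
  (Measurable.ite (measurableSet_le measurable_const measurable_snd) (by fun_prop)
    measurable_const).ennreal_ofReal

lemma gammaPDFReal_mul_gammaPDFReal_scale (a b : ℝ) {u v : ℝ} (hu : 0 ≤ u) (hv : 0 < v) :
    gammaPDFReal a (1 / 2) v * gammaPDFReal b (1 / (2 * v)) u =
      2 ^ (-(a + b)) / (Gamma b * Gamma a) * u ^ (b - 1) *
        (v ^ (a - b - 1) * exp (-(u / v + v) / 2)) := by
  have hexp : -(u / v + v) / 2 = -(1 / 2 * v) + -(1 / (2 * v) * u) := by field_simp; ring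
  rw [gammaPDFReal, gammaPDFReal, if_pos hv.le, if_pos hu, hexp, exp_add,
    show a - b - 1 = a - 1 + -b by ring, rpow_add hv, show -(a + b) = -a + -b by ring,
    rpow_add two_pos, one_div, one_div, inv_rpow zero_le_two, inv_rpow (by positivity),
    mul_rpow zero_le_two hv.le, rpow_neg zero_le_two, rpow_neg zero_le_two, rpow_neg hv.le]
  ring

lemma gammaMeasure_ae_pos (a r : ℝ) : ∀ᵐ v ∂gammaMeasure a r, 0 < v := by
  refine (ae_withDensity_iff (measurable_gammaPDFReal a r).ennreal_ofReal).mpr ?_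
  filter_upwards [Measure.ae_ne volume 0] with v hv hpdf
  exact hv.symm.lt_of_le (not_lt.mp fun hneg => hpdf (gammaPDF_of_neg hneg))

lemma lintegral_gammaPDF_mul_gammaPDF_scale {a b u : ℝ} (ha : 0 < a) (hb : 0 < b) (hu : 0 < u)
    (hfin : ∫⁻ v, gammaPDF a (1 / 2) v * gammaPDF b (1 / (2 * v)) u ≠ ∞) :
    ∫⁻ v, gammaPDF a (1 / 2) v * gammaPDF b (1 / (2 * v)) u =
      ENNReal.ofReal (2 ^ (-(a + b)) / (Gamma b * Gamma a) * u ^ (b - 1) *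
        ∫ v in Ioi 0, v ^ (a - b - 1) * exp (-(u / v + v) / 2)) := by
  set c := 2 ^ (-(a + b)) / (Gamma b * Gamma a) * u ^ (b - 1)
  have hc : 0 ≤ c := by
    have := Gamma_pos_of_pos ha; have := Gamma_pos_of_pos hb; positivity
  have hnonneg : 0 ≤ᵐ[volume.restrict (Ioi 0)]
      fun v => c * (v ^ (a - b - 1) * exp (-(u / v + v) / 2)) :=
    ae_restrict_of_forall_mem measurableSet_Ioi fun v (hv : 0 < v) => by positivity
  have hrestrict : ∫⁻ v, gammaPDF a (1 / 2) v * gammaPDF b (1 / (2 * v)) u =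
      ∫⁻ v in Ioi 0, ENNReal.ofReal (c * (v ^ (a - b - 1) * exp (-(u / v + v) / 2))) := by
    rw [← setLIntegral_eq_of_support_subset (s := Ici 0), setLIntegral_congr Ioi_ae_eq_Ici.symm]
    · refine setLIntegral_congr_fun measurableSet_Ioi fun v (hv : 0 < v) => ?_
      rw [gammaPDF, gammaPDF, ← ENNReal.ofReal_mul (gammaPDFReal_nonneg ha one_half_pos v),
        gammaPDFReal_mul_gammaPDFReal_scale a b hu.le hv]
    · intro v hv
      by_contra hneg
      exact hv (by simp only [gammaPDF_of_neg (not_le.mp hneg), zero_mul])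
  rw [hrestrict] at hfin ⊢
  have hint := (lintegral_ofReal_ne_top_iff_integrable (by fun_prop) hnonneg).mp hfin
  rw [← ofReal_integral_eq_lintegral_ofReal hint hnonneg, integral_const_mul]

/-- If `V ~ χ²_{n−p}` and `U | V = v ~ Gamma(shape (k−p)/2, scale 2v)`, then `U`
(the unconditional law of `SSR_s/σ²`) has Lebesgue density
`u ↦ 2^(−(n+k−2p)/2)/(Γ((k−p)/2)Γ((n−p)/2)) · u^((k−p)/2−1) · ∫_0^∞ v^((n−k)/2−1) e^(−(u/v+v)/2) dv`
on `(0,∞)`. -/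
theorem sketched_residuals_unconditional_density
    (n k p : ℕ) (hnp : p < n) (hkp : p < k) :
    (gammaMeasure (((n : ℝ) - p) / 2) (1 / 2)).bind
        (fun v => gammaMeasure (((k : ℝ) - p) / 2) (1 / (2 * v))) =
      volume.withDensity (fun u =>
        ENNReal.ofReal (if 0 < u then
          (2 : ℝ) ^ (-(((n : ℝ) + k - 2 * p) / 2)) /
              (Real.Gamma (((k : ℝ) - p) / 2) * Real.Gamma (((n : ℝ) - p) / 2)) *
            u ^ (((k : ℝ) - p) / 2 - 1) *
            ∫ v in Set.Ioi (0 : ℝ),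
              v ^ (((n : ℝ) - k) / 2 - 1) * Real.exp (-(u / v + v) / 2)
        else 0)) := by
  have ha : 0 < ((n : ℝ) - p) / 2 := div_pos (sub_pos.mpr (by exact_mod_cast hnp)) two_pos
  have hb : 0 < ((k : ℝ) - p) / 2 := div_pos (sub_pos.mpr (by exact_mod_cast hkp)) two_pos
  set a := ((n : ℝ) - p) / 2
  set b := ((k : ℝ) - p) / 2
  have hf : Measurable (gammaPDF a (1 / 2)) := (measurable_gammaPDFReal a _).ennreal_ofReal
  have hg : Measurable (Function.uncurry fun v u => gammaPDF b (1 / (2 * v)) u) :=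
    measurable_gammaPDF_of_measurable_rate b (r := fun v => 1 / (2 * v)) (by fun_prop)
  have hprob := isProbabilityMeasure_gammaMeasure ha one_half_pos
  have hmix : IsProbabilityMeasure ((gammaMeasure a (1 / 2)).bind
      fun v => gammaMeasure b (1 / (2 * v))) :=
    isProbabilityMeasure_bind (Measure.measurable_withDensity_of_measurable_uncurry hg).aemeasurable
      (by filter_upwards [gammaMeasure_ae_pos a (1 / 2)] with v hv
          exact isProbabilityMeasure_gammaMeasure hb (by positivity))
  simp only [gammaMeasure, Measure.withDensity_bind_withDensity hf hg] at hmix ⊢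
  refine withDensity_congr_ae ?_
  have hL : Measurable fun u => ∫⁻ v, gammaPDF a (1 / 2) v * gammaPDF b (1 / (2 * v)) u :=
    ((hf.comp measurable_fst).mul hg).lintegral_prod_left'
  filter_upwards [Measure.ae_lt_top_of_isFiniteMeasure_withDensity hL.aemeasurable,
    Measure.ae_ne volume 0] with u hfin hu
  rcases hu.lt_or_gt with hneg | hpos
  · simp [gammaPDF_of_neg hneg, not_lt.mpr hneg.le]
  · rw [lintegral_gammaPDF_mul_gammaPDF_scale ha hb hpos hfin.ne, if_pos hpos,
      show a + b = ((n : ℝ) + k - 2 * p) / 2 by ring, show a - b - 1 = ((n : ℝ) - k) / 2 - 1 by ring]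
end
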